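/- arXiv:1712.08532 — 3 statements merged into one kernel-verified Lean document; each statement's English description precedes it below -/
import Mathlib

section
/- Let μ > λ ≥ |L| + ℵ₀ be cardinals with μ regular, and let M be an L-structure generated by a sequence (b_i)_{i<κ} (κ ≥ μ) that is quantifier-free indiscernible over ∅. Then for any sequence (a_j)_{j<μ} of distinct elements of M and any set A ⊆ M with |A| < μ, there is a subsequence of (a_j)_{j<μ} of length μ that is quantifier-free indiscernible over A. -/
open FirstOrder Cardinal

/-- `b` and `c` realize the same quantifier-free type over `A`. -/
def SameQFType (L : FirstOrder.Language) {M : Type*} [L.Structure M] (A : Set M)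
    {n : ℕ} (b c : Fin n → M) : Prop :=
  ∀ (m : ℕ) (as : Fin m → A) (φ : L.Formula (Fin n ⊕ Fin m)), φ.IsQF →
    (φ.Realize (Sum.elim b (fun i => (as i : M))) ↔
      φ.Realize (Sum.elim c (fun i => (as i : M))))

/-- `(a i)` is quantifier-free indiscernible over `A`: any two finite subsequences of distinct
entries of the same length realize the same quantifier-free type over `A`. -/
def QFIndiscernible (L : FirstOrder.Language) {M : Type*} [L.Structure M] (A : Set M)
    {ι : Type*} (a : ι → M) : Prop :=
  ∀ (n : ℕ) (f g : Fin n → ι), Function.Injective f → Function.Injective g →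
    SameQFType L A (a ∘ f) (a ∘ g)

/-!
Write every element of `M` as a term applied to an injective tuple of the `b i`. There are fewer
than `μ` terms, so by pigeonhole `μ` many `a j` use the same term `t`. By the Δ-system lemma and a
second pigeonhole, `μ` many of their tuples form a Δ-system whose root sits at the same positions
in every tuple; since the outer parts are disjoint, discarding the fewer than `μ` tuples whose outer
part meets the indices used by the elements of `A` still leaves `μ` of them. For any choice of
distinct such tuples, the indices that occur in them and in the representations of finitely many
parameters from `A` have the same equality pattern, so the indiscernibility of `b` transfers.
-/

open FirstOrder.Language Set Function

universe u

section DeltaSystem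

variable {J ι : Type u} {μ : Cardinal.{u}}

theorem exists_pairwise_disjoint_of_forall_mk_lt (hreg : μ.IsRegular) {s : J → Set ι}
    (hs : ∀ j, #(s j) < μ) (hpt : ∀ x, #{j | x ∈ s j} < μ) (hJ : μ ≤ #J) :
    ∃ X : Set J, μ ≤ #X ∧ X.Pairwise (Disjoint on s) := by
  obtain ⟨X, hX⟩ := zorn_subset {X : Set J | X.Pairwise (Disjoint on s)} fun c hc hchain =>
    ⟨⋃₀ c, (pairwise_sUnion hchain.directedOn).2 hc, fun _ => subset_sUnion_of_mem⟩
  refine ⟨X, ?_, hX.prop⟩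
  by_contra! hXμ
  set Meet := ⋃ x : ⋃ j : X, s j, {j | (x : ι) ∈ s j}
  have hMeet : #Meet < μ := by
    refine (card_iUnion_lt_iff_forall_of_isRegular hreg ?_).2 fun x => hpt x
    exact (card_iUnion_lt_iff_forall_of_isRegular hreg hXμ).2 fun j => hs j
  -- by maximality of `X`, every index outside `X` has a set meeting one of the sets of `X`
  have hcover : Set.univ ⊆ X ∪ Meet := by
    intro j _
    by_contra! hj
    simp only [mem_union, not_or] at hj
    refine hj.1 ((hX.eq_of_subset (hX.prop.insert fun j' hj' _ => ?_) (subset_insert j X)).symm ▸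
      mem_insert j X)
    have : Disjoint (s j) (s j') := Set.disjoint_left.2 fun x hx hx' =>
      hj.2 (mem_iUnion.2 ⟨⟨x, mem_iUnion.2 ⟨⟨j', hj'⟩, hx'⟩⟩, hx⟩)
    exact ⟨this, this.symm⟩
  have := hJ.trans ((mk_univ.symm.le.trans (mk_le_mk_of_subset hcover)).trans (mk_union_le _ _))
  exact this.not_gt (add_lt_of_lt hreg.aleph0_le hXμ hMeet)

theorem exists_pairwise_inter_eq [DecidableEq ι] (hreg : μ.IsRegular) (n : ℕ) (s : J → Finset ι)
    (hs : ∀ j, (s j).card ≤ n) (hJ : μ ≤ #J) :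
    ∃ (r : Finset ι) (X : Set J), μ ≤ #X ∧ X.Pairwise fun j j' => s j ∩ s j' = r := by
  induction n generalizing J with
  | zero =>
    refine ⟨∅, Set.univ, by rwa [mk_univ], fun j _ j' _ _ => ?_⟩
    simp [Finset.card_eq_zero.1 (Nat.le_zero.1 (hs j))]
  | succ n ih =>
    by_cases hbig : ∃ x, μ ≤ #{j | x ∈ s j}
    · obtain ⟨x, hx⟩ := hbig
      obtain ⟨r, X, hX, hXr⟩ := ih (fun j : {j | x ∈ s j} => (s j).erase x)
        (fun j => by have := hs j; rw [Finset.card_erase_of_mem j.2]; omega) hx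
      refine ⟨insert x r, (↑) '' X, by rwa [mk_image_eq Subtype.val_injective], ?_⟩
      rintro _ ⟨j, hj, rfl⟩ _ ⟨j', hj', rfl⟩ hne
      rw [← hXr hj hj' (ne_of_apply_ne _ hne), Finset.erase_inter, Finset.inter_erase,
        Finset.erase_idem, Finset.insert_erase (Finset.mem_inter.2 ⟨j.2, j'.2⟩)]
    · push Not at hbig
      obtain ⟨X, hX, hdisj⟩ := exists_pairwise_disjoint_of_forall_mk_lt hreg (s := fun j => ↑(s j))
        (fun j => (lt_aleph0_of_finite _).trans_le hreg.aleph0_le) (fun x => hbig x) hJ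
      exact ⟨∅, X, hX, fun j hj j' hj' hne =>
        Finset.disjoint_iff_inter_eq_empty.1 (Finset.disjoint_coe.1 (hdisj hj hj' hne))⟩

end DeltaSystem

/-- A Δ-system of injective tuples whose root sits at the same positions in every tuple:
`ρ q = some r` says that each tuple has the root element `r` at position `q`. -/
structure IsTupleDeltaSystemOn {J ι : Type*} {n : ℕ} (V : J → Fin n → ι)
    (ρ : Fin n → Option ι) (X : Set J) : Prop where
  injective : ∀ j ∈ X, Injective (V j)
  apply_of_eq_some : ∀ j ∈ X, ∀ q r, ρ q = some r → V j q = r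
  apply_ne_of_eq_none : ∀ j ∈ X, ∀ j' ∈ X, j ≠ j' → ∀ q q', ρ q = none → V j q ≠ V j' q'

namespace IsTupleDeltaSystemOn

section

variable {J ι : Type*} {n : ℕ} {V : J → Fin n → ι} {ρ : Fin n → Option ι} {X : Set J}

theorem mono (h : IsTupleDeltaSystemOn V ρ X) {Y : Set J} (hYX : Y ⊆ X) :
    IsTupleDeltaSystemOn V ρ Y where
  injective j hj := h.injective j (hYX hj)
  apply_of_eq_some j hj := h.apply_of_eq_some j (hYX hj)
  apply_ne_of_eq_none j hj j' hj' := h.apply_ne_of_eq_none j (hYX hj) j' (hYX hj')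

theorem apply_eq_apply_iff (h : IsTupleDeltaSystemOn V ρ X) {j j' : J} (hj : j ∈ X)
    (hj' : j' ∈ X) {q q' : Fin n} (hq : ρ q = none) : V j q = V j' q' ↔ j = j' ∧ q = q' := by
  refine ⟨fun heq => ?_, fun ⟨hjj, hqq⟩ => hjj ▸ hqq ▸ rfl⟩
  by_cases hjj : j = j'
  · subst hjj
    exact ⟨rfl, h.injective j hj heq⟩
  · exact absurd heq (h.apply_ne_of_eq_none j hj j' hj' hjj q q' hq)

end

variable {J ι : Type u} {n : ℕ} {V : J → Fin n → ι} {ρ : Fin n → Option ι} {X : Set J}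

theorem mk_setOf_apply_mem_le (h : IsTupleDeltaSystemOn V ρ X) (S : Set ι) :
    #{j ∈ X | ∃ q, ρ q = none ∧ V j q ∈ S} ≤ #S := by
  choose q hq hqS using fun j : {j ∈ X | ∃ q, ρ q = none ∧ V j q ∈ S} => j.2.2
  refine mk_le_of_injective (f := fun j => ⟨V j (q j), hqS j⟩) fun j j' hjj => ?_
  exact Subtype.ext ((h.apply_eq_apply_iff j.2.1 j'.2.1 (hq j)).1 (congrArg Subtype.val hjj)).1

end IsTupleDeltaSystemOn

section TupleDeltaSystem

variable {J ι : Type u} {μ : Cardinal.{u}} {n : ℕ}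

theorem exists_isTupleDeltaSystemOn (hreg : μ.IsRegular) (V : J → Fin n → ι)
    (hV : ∀ j, Injective (V j)) (hJ : μ ≤ #J) :
    ∃ (X : Set J) (ρ : Fin n → Option ι), μ ≤ #X ∧ IsTupleDeltaSystemOn V ρ X := by
  classical
  obtain ⟨r, X, hX, hXr⟩ := exists_pairwise_inter_eq hreg n (fun j => Finset.univ.image (V j))
    (fun j => Finset.card_image_le.trans (Finset.card_fin n).le) hJ
  let pattern : X → Fin n → Option r := fun j q =>
    if hq : V j q ∈ r then some ⟨V j q, hq⟩ else none
  obtain ⟨P, Y, hYX, hY, hYP⟩ := infinite_pigeonhole_set pattern μ hX hreg.aleph0_le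
    (by rw [hreg.cof_ord]; exact (lt_aleph0_of_finite _).trans_le hreg.aleph0_le)
  have hρ : ∀ j ∈ Y, ∀ q, (P q).map (↑) = if V j q ∈ r then some (V j q) else none := by
    intro j hj q
    rw [← hYP hj]
    by_cases hq : V j q ∈ r <;> simp [pattern, hq]
  refine ⟨Y, fun q => (P q).map (↑), hY, fun j _ => hV j, fun j hj q x hx => ?_,
    fun j hj j' hj' hne q q' hq heq => ?_⟩
  · rw [hρ j hj q] at hx
    split_ifs at hx
    exact Option.some_inj.1 hx
  · rw [hρ j hj q] at hq
    split_ifs at hq with hr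
    refine hr (hXr (hYX hj) (hYX hj') hne ▸ Finset.mem_inter.2 ⟨?_, ?_⟩)
    · exact Finset.mem_image_of_mem _ (Finset.mem_univ q)
    · exact heq ▸ Finset.mem_image_of_mem _ (Finset.mem_univ q')

theorem exists_isTupleDeltaSystemOn_avoiding (hreg : μ.IsRegular) (V : J → Fin n → ι)
    (hV : ∀ j, Injective (V j)) (hJ : μ ≤ #J) {S : Set ι} (hS : #S < μ) :
    ∃ (X : Set J) (ρ : Fin n → Option ι), μ ≤ #X ∧ IsTupleDeltaSystemOn V ρ X ∧
      ∀ j ∈ X, ∀ q, ρ q = none → V j q ∉ S := by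
  obtain ⟨X, ρ, hX, hρ⟩ := exists_isTupleDeltaSystemOn hreg V hV hJ
  let Bad := {j ∈ X | ∃ q, ρ q = none ∧ V j q ∈ S}
  have hBad : #Bad < μ := (hρ.mk_setOf_apply_mem_le S).trans_lt hS
  refine ⟨X \ Bad, ρ, ?_, hρ.mono sdiff_subset, fun j hj q hq hqS => hj.2 ⟨hj.1, q, hq, hqS⟩⟩
  by_contra! h
  exact (hX.trans (le_mk_sdiff_add_mk X Bad)).not_gt (add_lt_of_lt hreg.aleph0_le h hBad)

end TupleDeltaSystem

section PositionCode

variable {J ι P : Type*} {n k : ℕ} {V : J → Fin n → ι} {ρ : Fin n → Option ι} {X : Set J}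

/-- Codes the positions of `k` tuples of a Δ-system followed by parameter positions indexed by
`w`: root and parameter positions by the index they carry, the other positions by themselves. Two
positions carry the same index in `k` distinct tuples exactly when their codes agree. -/
def positionCode (ρ : Fin n → Option ι) (w : P → ι) :
    (Fin k × Fin n) ⊕ P → ι ⊕ (Fin k × Fin n) :=
  Sum.elim (fun iq => (ρ iq.2).elim (.inr iq) .inl) (.inl ∘ w)

def codeIndex (V : J → Fin n → ι) (h : Fin k → J) : ι ⊕ (Fin k × Fin n) → ι :=
  Sum.elim id fun iq => V (h iq.1) iq.2

theorem IsTupleDeltaSystemOn.codeIndex_comp_positionCode (hV : IsTupleDeltaSystemOn V ρ X)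
    {h : Fin k → J} (hhX : ∀ i, h i ∈ X) (w : P → ι) :
    codeIndex V h ∘ positionCode ρ w = Sum.elim (fun iq => V (h iq.1) iq.2) w := by
  ext (⟨i, q⟩ | p)
  · cases hq : ρ q with
    | none => simp [codeIndex, positionCode, hq]
    | some r => simp [codeIndex, positionCode, hq, hV.apply_of_eq_some _ (hhX i) q r hq]
  · rfl

theorem IsTupleDeltaSystemOn.injOn_codeIndex (hV : IsTupleDeltaSystemOn V ρ X) {h : Fin k → J}
    (hh : Injective h) (hhX : ∀ i, h i ∈ X) {w : P → ι} (hw : ∀ i q, ρ q = none → V (h i) q ∉ range w) :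
    InjOn (codeIndex V h) (range (positionCode ρ w)) := by
  have hinr : ∀ iq : Fin k × Fin n, .inr iq ∈ range (positionCode ρ w) → ρ iq.2 = none := by
    rintro iq ⟨⟨i, q⟩ | p, hd⟩
    · cases hq : ρ q with
      | none =>
        simp only [positionCode, Sum.elim_inl, hq, Option.elim_none, Sum.inr.injEq] at hd
        exact hd ▸ hq
      | some _ => simp [positionCode, hq] at hd
    · simp [positionCode] at hd
  have hinl : ∀ r, (.inl r : ι ⊕ (Fin k × Fin n)) ∈ range (positionCode ρ w) →
      ∀ i q, ρ q = none → V (h i) q ≠ r := by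
    rintro r ⟨⟨i', q'⟩ | p, hd⟩ i q hq rfl
    · cases hq' : ρ q' with
      | none => simp [positionCode, hq'] at hd
      | some r =>
        simp only [positionCode, Sum.elim_inl, hq', Option.elim_some, Sum.inl.injEq] at hd
        have heq := (hV.apply_of_eq_some _ (hhX i') q' r hq').trans hd
        obtain ⟨-, rfl⟩ := (hV.apply_eq_apply_iff (hhX i) (hhX i') hq).1 heq.symm
        simp [hq] at hq'
    · exact hw i q hq ⟨p, Sum.inl_injective hd⟩
  rintro (r | ⟨i, q⟩) hx (r' | ⟨i', q'⟩) hy heq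
  · exact congrArg _ heq
  · exact absurd heq.symm (hinl r hx i' q' (hinr _ hy))
  · exact absurd heq (hinl r' hy i q (hinr _ hx))
  · obtain ⟨hii, rfl⟩ := (hV.apply_eq_apply_iff (hhX i) (hhX i') (hinr _ hx)).1 heq
    rw [hh hii]

end PositionCode

theorem FirstOrder.Language.BoundedFormula.IsQF.subst {L : FirstOrder.Language} {α β : Type*}
    {n : ℕ} {φ : L.BoundedFormula α n} (h : φ.IsQF) (f : α → L.Term β) : (φ.subst f).IsQF := by
  induction h with
  | falsum => exact isQF_bot
  | of_isAtomic h =>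
    cases h with
    | equal => exact (IsAtomic.equal _ _).isQF
    | rel => exact (IsAtomic.rel _ _).isQF
  | imp _ _ ih₁ ih₂ => exact ih₁.imp ih₂

namespace QFIndiscernible

variable {L : FirstOrder.Language} {M : Type*} [L.Structure M] {ι : Type*} {b : ι → M}

theorem comp {A : Set M} (hb : QFIndiscernible L A b) {κ : Type*} {e : κ → ι}
    (he : Injective e) : QFIndiscernible L A (b ∘ e) :=
  fun n f g hf hg => hb n (e ∘ f) (e ∘ g) (he.comp hf) (he.comp hg)

theorem realize_iff_of_injective (hb : QFIndiscernible L ∅ b) {C α : Type*} [Finite C]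
    {u u' : C → ι} (hu : Injective u) (hu' : Injective u') (t : α → L.Term C)
    {φ : L.Formula α} (hφ : φ.IsQF) :
    φ.Realize (fun x => (t x).realize (b ∘ u)) ↔ φ.Realize (fun x => (t x).realize (b ∘ u')) := by
  let e := Finite.equivFin C
  have key := hb _ (u ∘ e.symm) (u' ∘ e.symm) (hu.comp e.symm.injective)
    (hu'.comp e.symm.injective) 0 finZeroElim (Formula.relabel (Sum.inl ∘ e) (φ.subst t))
    ((hφ.subst t).relabel _)
  have hv (w : C → ι) :
      Sum.elim (b ∘ w ∘ e.symm) (fun i => (finZeroElim (α := fun _ => (∅ : Set M)) i : M)) ∘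
        (Sum.inl ∘ e) = b ∘ w := by
    ext; simp
  rw [Formula.realize_relabel, Formula.realize_relabel, hv, hv] at key
  simpa only [Formula.Realize, BoundedFormula.realize_subst] using key

theorem realize_iff_of_injOn (hb : QFIndiscernible L ∅ b) {D C α : Type*} [Finite D]
    (f : D → C) {ψ ψ' : C → ι} (hψ : InjOn ψ (range f)) (hψ' : InjOn ψ' (range f))
    (t : α → L.Term D) {φ : L.Formula α} (hφ : φ.IsQF) :
    φ.Realize (fun x => (t x).realize (b ∘ ψ ∘ f)) ↔
      φ.Realize (fun x => (t x).realize (b ∘ ψ' ∘ f)) := by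
  have h := hb.realize_iff_of_injective hψ.injective hψ'.injective
    (fun x => (t x).relabel (rangeFactorization f)) hφ
  simp only [Term.realize_relabel] at h
  exact h

end QFIndiscernible

section Terms

variable {L : FirstOrder.Language} {M : Type*} [L.Structure M] {ι : Type*}

theorem exists_term_realize_eq_of_mem_closure {b : ι → M} {x : M}
    (hx : x ∈ Substructure.closure L (range b)) :
    ∃ (n : ℕ) (t : L.Term (Fin n)) (v : Fin n → ι), Injective v ∧ t.realize (b ∘ v) = x := by
  classical
  obtain ⟨t, rfl⟩ := Substructure.mem_closure_iff_exists_term.1 hx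
  let e := t.varFinset.equivFin
  exact ⟨_, t.restrictVar e, rangeSplitting b ∘ (↑) ∘ e.symm,
    (rangeSplitting_injective b).comp (Subtype.val_injective.comp e.symm.injective),
    Term.realize_restrictVar _ fun y => by simp [apply_rangeSplitting]⟩

theorem mk_sigma_term_fin_le (L : FirstOrder.Language.{u, u}) :
    #(Σ n : ULift.{u} ℕ, L.Term (Fin n.down)) ≤ L.card + ℵ₀ := by
  have hfun : #(Σ l, L.Functions l) ≤ L.card :=
    mk_le_of_injective (Sum.inl_injective : Injective (Sum.inl : _ → L.Symbols))
  have hterm (n : ℕ) : #(L.Term (Fin n)) ≤ L.card + ℵ₀ := by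
    refine Term.card_le.trans (max_le le_add_self ?_)
    rw [mk_sum, add_comm, lift_uzero]
    gcongr
    simp [(natCast_lt_aleph0 (n := n)).le]
  calc #(Σ n : ULift.{u} ℕ, L.Term (Fin n.down))
      ≤ #(ULift.{u} ℕ) * (L.card + ℵ₀) := by
        rw [mk_sigma]
        exact (sum_le_sum _ _ fun n : ULift ℕ => hterm n.down).trans_eq (sum_const' _ _)
    _ = L.card + ℵ₀ := by
        rw [mk_uLift, mk_nat, lift_aleph0]
        exact aleph0_mul_eq le_add_self

theorem exists_term_le_mk_setOf {L : FirstOrder.Language.{u, u}} {M : Type*} [L.Structure M]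
    {ι J : Type u} {b : ι → M} (hgen : Substructure.closure L (range b) = ⊤) {μ : Cardinal.{u}}
    (hreg : μ.IsRegular) (hL : L.card + ℵ₀ < μ) (a : J → M) (hJ : μ ≤ #J) :
    ∃ (n : ℕ) (t : L.Term (Fin n)),
      μ ≤ #{j | ∃ v : Fin n → ι, Injective v ∧ t.realize (b ∘ v) = a j} := by
  have hrep (j : J) : ∃ p : Σ n : ULift.{u} ℕ, L.Term (Fin n.down),
      ∃ v : Fin p.1.down → ι, Injective v ∧ p.2.realize (b ∘ v) = a j := by
    obtain ⟨n, t, v, hv, ht⟩ :=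
      exists_term_realize_eq_of_mem_closure (hgen.symm ▸ Substructure.mem_top (a j))
    exact ⟨⟨⟨n⟩, t⟩, v, hv, ht⟩
  choose shape hshape using hrep
  obtain ⟨⟨⟨n⟩, t⟩, ht⟩ := infinite_pigeonhole_card shape μ hJ hreg.aleph0_le
    (by rw [hreg.cof_ord]; exact (mk_sigma_term_fin_le L).trans_lt hL)
  refine ⟨n, t, ht.trans (mk_le_mk_of_subset fun j (hj : shape j = _) => ?_)⟩
  have := hshape j
  rw [hj] at this
  exact this

end Terms

theorem QFIndiscernible.of_isTupleDeltaSystemOn {L : FirstOrder.Language} {M : Type*}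
    [L.Structure M] {ι J : Type*} {b : ι → M} (hb : QFIndiscernible L ∅ b) {n : ℕ}
    {t : L.Term (Fin n)} {V : J → Fin n → ι} {ρ : Fin n → Option ι} {X : Set J}
    (hV : IsTupleDeltaSystemOn V ρ X) {c : J → M} (hc : ∀ j ∈ X, t.realize (b ∘ V j) = c j)
    {A : Set M} (hA : ∀ x ∈ A, ∃ (m : ℕ) (s : L.Term (Fin m)) (w : Fin m → ι),
      s.realize (b ∘ w) = x ∧ ∀ j ∈ X, ∀ q, ρ q = none → V j q ∉ range w) :
    QFIndiscernible L A (fun j : X => c j) := by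
  intro k f g hf hg m as φ hφ
  choose mA sA wA hsA hwA using fun p => hA (as p) (as p).2
  let w : (Σ p, Fin (mA p)) → ι := fun pq => wA pq.1 pq.2
  have hw (h : Fin k → X) (i q) (hq : ρ q = none) : V (h i) q ∉ range w :=
    fun ⟨⟨p, q'⟩, hpq⟩ => hwA p _ (h i).2 q hq ⟨q', hpq⟩
  let θ : Fin k ⊕ Fin m → L.Term ((Fin k × Fin n) ⊕ Σ p, Fin (mA p)) :=
    Sum.elim (fun i => t.relabel fun q => .inl (i, q)) fun p => (sA p).relabel fun q => .inr ⟨p, q⟩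
  have hθ (h : Fin k → X) :
      (fun x => (θ x).realize (b ∘ codeIndex V (Subtype.val ∘ h) ∘ positionCode ρ w)) =
        Sum.elim ((fun j : X => c j) ∘ h) fun p => (as p : M) := by
    rw [hV.codeIndex_comp_positionCode (h := Subtype.val ∘ h) (fun i => (h i).2) w]
    ext (i | p)
    · simp only [θ, Sum.elim_inl, Term.realize_relabel]
      exact hc _ (h i).2
    · simp only [θ, Sum.elim_inr, Term.realize_relabel]
      exact hsA p
  have key := hb.realize_iff_of_injOn (positionCode ρ w)
    (hV.injOn_codeIndex (Subtype.val_injective.comp hf) (fun i => (f i).2) (hw f))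
    (hV.injOn_codeIndex (Subtype.val_injective.comp hg) (fun i => (g i).2) (hw g)) θ hφ
  rwa [hθ, hθ] at key

theorem stmt4_general {L : FirstOrder.Language.{u, u}} {M : Type u} [L.Structure M]
    (lam μ : Cardinal.{u}) (hL : L.card + ℵ₀ ≤ lam) (hμ : lam < μ) (hreg : μ.IsRegular)
    {ι : Type u} (b : ι → M)
    (hind : QFIndiscernible L (∅ : Set M) b)
    (hgen : FirstOrder.Language.Substructure.closure L (Set.range b) = ⊤)
    (a : μ.ord.ToType → M)
    (A : Set M) (hA : #A < μ) :
    ∃ X : Set μ.ord.ToType, #X = μ ∧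
      QFIndiscernible L A (fun x : X => a x) := by
  choose mA sA wA _ hsA using fun x : A =>
    exists_term_realize_eq_of_mem_closure (hgen.symm ▸ Substructure.mem_top (x : M))
  let S := ⋃ x : A, range (wA x)
  have hS : #S < μ := (card_iUnion_lt_iff_forall_of_isRegular hreg hA).2 fun x =>
    (lt_aleph0_of_finite _).trans_le hreg.aleph0_le
  obtain ⟨n, t, hJ⟩ := exists_term_le_mk_setOf hgen hreg (hL.trans_lt hμ) a (mk_ord_toType μ).ge
  choose V hV htV using
    fun j : {j | ∃ v : Fin n → ι, Injective v ∧ t.realize (b ∘ v) = a j} => j.2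
  obtain ⟨X, ρ, hX, hρ, hXS⟩ := exists_isTupleDeltaSystemOn_avoiding hreg V hV hJ hS
  have hXind : QFIndiscernible L A (fun j : X => a j.1) :=
    hind.of_isTupleDeltaSystemOn hρ (c := fun j => a j) (fun j _ => htV j) fun x hx =>
      ⟨_, sA ⟨x, hx⟩, wA ⟨x, hx⟩, hsA _, fun j hj q hq hmem =>
        hXS j hj q hq (mem_iUnion.2 ⟨⟨x, hx⟩, hmem⟩)⟩
  let e := Equiv.Set.image Subtype.val X Subtype.val_injective
  refine ⟨Subtype.val '' X, ?_, ?_⟩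
  · refine ((mk_set_le _).trans (mk_ord_toType μ).le).antisymm ?_
    rwa [mk_image_eq Subtype.val_injective]
  · convert hXind.comp e.symm.injective using 1
    ext x
    exact congrArg (a ∘ Subtype.val) (e.apply_symm_apply x).symm

/-- If `M` is generated by a quantifier-free indiscernible sequence of length `κ ≥ μ`, where
`μ > λ ≥ |L| + ℵ₀` and `μ` is regular, then any sequence of `μ` distinct elements of `M` has a
subsequence of length `μ` that is quantifier-free indiscernible over any given `A ⊆ M` with
`|A| < μ`. -/
theorem stmt4 {L : FirstOrder.Language.{u, u}} {M : Type u} [L.Structure M]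
    (lam μ κ : Cardinal.{u}) (hL : L.card + ℵ₀ ≤ lam) (hμ : lam < μ) (hreg : μ.IsRegular)
    (hκ : μ ≤ κ) {ι : Type u} [LinearOrder ι] (hι : #ι = κ) (b : ι → M)
    (hind : QFIndiscernible L (∅ : Set M) b)
    (hgen : FirstOrder.Language.Substructure.closure L (Set.range b) = ⊤)
    (a : μ.ord.ToType → M) (hdist : Function.Injective a)
    (A : Set M) (hA : #A < μ) :
    ∃ X : Set μ.ord.ToType, #X = μ ∧
      QFIndiscernible L A (fun x : X => a x) :=
  stmt4_general lam μ hL hμ hreg b hind hgen a A hA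
end

section
/- Let (X, cl) be a modular pregeometry, and let Y, Z be closed subsets of X. If Y₀ is a basis of Y ∩ Z extended to a basis Y₀ ∪ Y₁ of Y, and further extended by Z₁ to a basis of cl(Y ∪ Z), then Y₀ ∪ Z₁ spans Z; in particular Y and Z are independent over Y ∩ Z. -/
/-!
Let `S = Y₁ \ Y₀`. Since `Y₀ ∪ Y₁` is independent and `Y ∩ Z ⊆ cl Y₀`, the set `S` is independent
over `Y ∩ Z`, hence over `Z` by modularity. Every `z ∈ Z` lies in `cl (S ∪ Y₀ ∪ Z₁)`, and the
elements of `S` can be discarded one at a time: if removing `y ∈ S` lost `z`, exchange would put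
`y` into the closure of `Z` together with the rest of `S`.
-/

def IndepOver {X : Type*} (cl : Set X → Set X) (B S : Set X) : Prop :=
  ∀ s ∈ S, s ∉ cl (B ∪ (S \ {s}))

namespace IndepOver

variable {X : Type*} {cl : Set X → Set X}

theorem of_diff_of_subset_cl (hmono : ∀ A B : Set X, A ⊆ B → cl A ⊆ cl B)
    (hext : ∀ A : Set X, A ⊆ cl A) (hidem : ∀ A : Set X, cl (cl A) = cl A)
    {T T₀ C : Set X} (hT : ∀ s ∈ T, s ∉ cl (T \ {s})) (hC : C ⊆ cl T₀) (hT₀ : T₀ ⊆ T) :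
    IndepOver cl C (T \ T₀) := by
  intro s ⟨hsT, hsT₀⟩ hs
  have hT₀s : T₀ ⊆ T \ {s} := fun t ht => ⟨hT₀ ht, by rintro rfl; exact hsT₀ ht⟩
  have hsub : C ∪ ((T \ T₀) \ {s}) ⊆ cl (T \ {s}) := by
    rintro x (hx | ⟨⟨hxT, -⟩, hxs⟩)
    · exact hmono _ _ hT₀s (hC hx)
    · exact hext _ ⟨hxT, hxs⟩
  exact hT s hsT (hidem (T \ {s}) ▸ hmono _ _ hsub hs)

variable {B S A : Set X} {z : X}

theorem mem_cl_of_mem_cl_finite_union (hmono : ∀ A B : Set X, A ⊆ B → cl A ⊆ cl B)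
    (hexch : ∀ (A : Set X) (a b : X), a ∈ cl (A ∪ {b}) → a ∉ cl A → b ∈ cl (A ∪ {a}))
    (hS : IndepOver cl B S) (hA : A ⊆ B) (hz : z ∈ B) {F : Set X} (hF : F.Finite)
    (hFS : F ⊆ S) (hzF : z ∈ cl (F ∪ A)) : z ∈ cl A := by
  induction F, hF using Set.Finite.induction_on with
  | empty => simpa using hzF
  | @insert y F hyF _ ih =>
    have hFS' : F ⊆ S := (Set.subset_insert y F).trans hFS
    by_contra hzA
    have hz' : z ∉ cl (F ∪ A) := fun h => hzA (ih hFS' h)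
    rw [Set.insert_union, ← Set.union_singleton] at hzF
    -- exchange moves `y` to the other side, into `cl (B ∪ (S \ {y}))`
    have hy := hexch _ z y hzF hz'
    refine hS y (hFS (Set.mem_insert y F)) (hmono _ _ ?_ hy)
    rintro x ((hxF | hxA) | rfl)
    · exact Or.inr ⟨hFS' hxF, by rintro rfl; exact hyF hxF⟩
    · exact Or.inl (hA hxA)
    · exact Or.inl hz

theorem mem_cl_of_mem_cl_union (hmono : ∀ A B : Set X, A ⊆ B → cl A ⊆ cl B)
    (hfin : ∀ (A : Set X) (x : X), x ∈ cl A → ∃ F ⊆ A, F.Finite ∧ x ∈ cl F)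
    (hexch : ∀ (A : Set X) (a b : X), a ∈ cl (A ∪ {b}) → a ∉ cl A → b ∈ cl (A ∪ {a}))
    (hS : IndepOver cl B S) (hA : A ⊆ B) (hz : z ∈ B) (hzSA : z ∈ cl (S ∪ A)) : z ∈ cl A := by
  obtain ⟨F, hFSA, hF, hzF⟩ := hfin _ z hzSA
  refine mem_cl_of_mem_cl_finite_union hmono hexch hS hA hz (hF.inter_of_left S)
    Set.inter_subset_right (hmono _ _ ?_ hzF)
  intro x hx
  by_cases hxS : x ∈ S
  · exact Or.inl ⟨hx, hxS⟩
  · exact Or.inr ((hFSA hx).resolve_left hxS)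

end IndepOver

theorem stmt6_general {X : Type*} (cl : Set X → Set X)
    (hmono : ∀ A B : Set X, A ⊆ B → cl A ⊆ cl B)
    (hext : ∀ A : Set X, A ⊆ cl A)
    (hidem : ∀ A : Set X, cl (cl A) = cl A)
    (hfin : ∀ (A : Set X) (x : X), x ∈ cl A → ∃ F ⊆ A, F.Finite ∧ x ∈ cl F)
    (hexch : ∀ (A : Set X) (a b : X), a ∈ cl (A ∪ {b}) → a ∉ cl A → b ∈ cl (A ∪ {a}))
    -- modularity: any two closed sets are independent over their intersection
    (hmodular : ∀ Y Z : Set X, cl Y = Y → cl Z = Z →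
      ∀ S ⊆ Y, (∀ s ∈ S, s ∉ cl ((Y ∩ Z) ∪ (S \ {s}))) → ∀ s ∈ S, s ∉ cl (Z ∪ (S \ {s})))
    (Y Z : Set X) (hY : cl Y = Y) (hZ : cl Z = Z)
    (Y₀ Y₁ Z₁ : Set X)
    -- `Y₀` is a basis of `Y ∩ Z`
    (hY₀sub : Y₀ ⊆ Y ∩ Z) (hY₀span : Y ∩ Z ⊆ cl Y₀)
    -- extended to a basis `Y₀ ∪ Y₁` of `Y`
    (hY₁sub : Y₀ ∪ Y₁ ⊆ Y)
    (hY₁ind : ∀ s ∈ Y₀ ∪ Y₁, s ∉ cl ((Y₀ ∪ Y₁) \ {s}))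
    -- further extended by `Z₁ ⊆ Z` to a basis of `cl (Y ∪ Z)`
    (hZ₁sub : Z₁ ⊆ Z) (hZ₁span : cl (Y ∪ Z) ⊆ cl (Y₀ ∪ Y₁ ∪ Z₁)) :
    Z ⊆ cl (Y₀ ∪ Z₁) ∧
      (∀ S ⊆ Y, (∀ s ∈ S, s ∉ cl ((Y ∩ Z) ∪ (S \ {s}))) → ∀ s ∈ S, s ∉ cl (Z ∪ (S \ {s}))) := by
  have hSY : IndepOver cl (Y ∩ Z) (Y₁ \ Y₀) := by
    simpa only [Set.union_sdiff_left] using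
      IndepOver.of_diff_of_subset_cl hmono hext hidem hY₁ind hY₀span Set.subset_union_left
  have hSZ : IndepOver cl Z (Y₁ \ Y₀) :=
    hmodular Y Z hY hZ _ (Set.sdiff_subset.trans (Set.subset_union_right.trans hY₁sub)) hSY
  refine ⟨fun z hz => ?_, hmodular Y Z hY hZ⟩
  have hzcl : z ∈ cl ((Y₁ \ Y₀) ∪ (Y₀ ∪ Z₁)) := by
    rw [← Set.union_assoc, Set.sdiff_union_self, Set.union_comm Y₁]
    exact hZ₁span (hext _ (Or.inr hz))
  exact IndepOver.mem_cl_of_mem_cl_union hmono hfin hexch hSZ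
    (Set.union_subset (hY₀sub.trans Set.inter_subset_right) hZ₁sub) hz hzcl

/-- In a modular pregeometry, if `Y, Z` are closed sets, `Y₀` is a basis of `Y ∩ Z` extended to a
basis `Y₀ ∪ Y₁` of `Y` and further extended by `Z₁ ⊆ Z` to a basis of `cl (Y ∪ Z)`, then
`Y₀ ∪ Z₁` spans `Z`; in particular `Y` and `Z` are independent over `Y ∩ Z`. -/
theorem stmt6 {X : Type*} (cl : Set X → Set X)
    (hmono : ∀ A B : Set X, A ⊆ B → cl A ⊆ cl B)
    (hext : ∀ A : Set X, A ⊆ cl A)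
    (hidem : ∀ A : Set X, cl (cl A) = cl A)
    (hfin : ∀ (A : Set X) (x : X), x ∈ cl A → ∃ F ⊆ A, F.Finite ∧ x ∈ cl F)
    (hexch : ∀ (A : Set X) (a b : X), a ∈ cl (A ∪ {b}) → a ∉ cl A → b ∈ cl (A ∪ {a}))
    -- modularity: any two closed sets are independent over their intersection
    (hmodular : ∀ Y Z : Set X, cl Y = Y → cl Z = Z →
      ∀ S ⊆ Y, (∀ s ∈ S, s ∉ cl ((Y ∩ Z) ∪ (S \ {s}))) → ∀ s ∈ S, s ∉ cl (Z ∪ (S \ {s})))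
    (Y Z : Set X) (hY : cl Y = Y) (hZ : cl Z = Z)
    (Y₀ Y₁ Z₁ : Set X)
    -- `Y₀` is a basis of `Y ∩ Z`
    (hY₀sub : Y₀ ⊆ Y ∩ Z) (hY₀span : Y ∩ Z ⊆ cl Y₀)
    (hY₀ind : ∀ s ∈ Y₀, s ∉ cl (Y₀ \ {s}))
    -- extended to a basis `Y₀ ∪ Y₁` of `Y`
    (hY₁sub : Y₀ ∪ Y₁ ⊆ Y) (hY₁span : Y ⊆ cl (Y₀ ∪ Y₁))
    (hY₁ind : ∀ s ∈ Y₀ ∪ Y₁, s ∉ cl ((Y₀ ∪ Y₁) \ {s}))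
    -- further extended by `Z₁ ⊆ Z` to a basis of `cl (Y ∪ Z)`
    (hZ₁sub : Z₁ ⊆ Z) (hZ₁span : cl (Y ∪ Z) ⊆ cl (Y₀ ∪ Y₁ ∪ Z₁))
    (hZ₁ind : ∀ s ∈ Y₀ ∪ Y₁ ∪ Z₁, s ∉ cl ((Y₀ ∪ Y₁ ∪ Z₁) \ {s})) :
    Z ⊆ cl (Y₀ ∪ Z₁) ∧
      (∀ S ⊆ Y, (∀ s ∈ S, s ∉ cl ((Y ∩ Z) ∪ (S \ {s}))) → ∀ s ∈ S, s ∉ cl (Z ∪ (S \ {s}))) :=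
  stmt6_general cl hmono hext hidem hfin hexch hmodular Y Z hY hZ Y₀ Y₁ Z₁ hY₀sub hY₀span hY₁sub
    hY₁ind hZ₁sub hZ₁span
end

section
/- Let G be a group acting on a set X, and for A ⊆ X define cl(A) to be the set of points of X fixed by every element of the pointwise stabilizer G_A of A. If G is hereditarily transitive on X (for every finite A ⊆ X, G_A acts transitively on X \ cl(A)), then cl restricted to finite sets extends to a closure operator of finite character on X satisfying the exchange property; that is, (X, cl) is a pregeometry. -/
/-- The fixed-point closure: points of `X` fixed by every element of the pointwise
stabilizer of `A` in `G`. -/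
def fixCl (G : Type*) {X : Type*} [Group G] [MulAction G X] (A : Set X) : Set X :=
  {x | ∀ g : G, (∀ a ∈ A, g • a = a) → g • x = x}

/-- The extension of the fixed-point closure to arbitrary sets by finite character. -/
def finCl (G : Type*) {X : Type*} [Group G] [MulAction G X] (A : Set X) : Set X :=
  ⋃ F ∈ {F : Set X | F ⊆ A ∧ F.Finite}, fixCl G F

section aux
variable {G X : Type*} [Group G] [MulAction G X]

lemma fixCl_mono {S T : Set X} (h : S ⊆ T) : fixCl G S ⊆ fixCl G T := by
  intro x hx g hg
  exact hx g fun a ha => hg a (h ha)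

lemma subset_fixCl (S : Set X) : S ⊆ fixCl G S := fun x hx g hg => hg x hx

lemma mem_finCl_iff {A : Set X} {x : X} :
    x ∈ finCl G A ↔ ∃ F, F ⊆ A ∧ F.Finite ∧ x ∈ fixCl G F := by
  simp only [finCl, Set.mem_iUnion, Set.mem_setOf_eq, exists_prop]
  tauto

lemma fixCl_conj {S : Set X} {b x : X} {k : G} (hk : ∀ z ∈ S, k • z = z)
    (hx : x ∈ fixCl G (S ∪ {b})) : k • x ∈ fixCl G (S ∪ {k • b}) := by
  intro h hh
  have key : ∀ z ∈ S ∪ {b}, (k⁻¹ * h * k) • z = z := by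
    intro z hz
    rcases hz with hz | hz
    · have h1 : k • z = z := hk z hz
      have h2 : h • z = z := hh z (Or.inl hz)
      rw [mul_smul, mul_smul, h1, h2, inv_smul_eq_iff, h1]
    · rcases hz with rfl
      have h2 : h • (k • z) = k • z := hh _ (Or.inr rfl)
      rw [mul_smul, mul_smul, h2, inv_smul_smul]
  have := hx _ key
  rw [mul_smul, mul_smul, inv_smul_eq_iff] at this
  exact this

end aux

/-- If `G` is hereditarily transitive on `X` (for every finite `A`, the pointwise stabilizer
of `A` is transitive on `X \ fixCl G A`), then the fixed-point closure of finite sets extends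
to a closure operator of finite character on `X` satisfying the exchange property, i.e.
`(X, finCl G)` is a pregeometry. -/
theorem stmt7 {G X : Type*} [Group G] [MulAction G X]
    (htrans : ∀ (A : Finset X) (x y : X), x ∉ fixCl G (↑A : Set X) →
      y ∉ fixCl G (↑A : Set X) → ∃ g : G, (∀ a ∈ A, g • a = a) ∧ g • x = y) :
    (∀ A : Set X, A ⊆ finCl G A) ∧
    (∀ A B : Set X, A ⊆ B → finCl G A ⊆ finCl G B) ∧
    (∀ A : Set X, finCl G (finCl G A) = finCl G A) ∧
    (∀ (A : Set X) (x : X), x ∈ finCl G A → ∃ F ⊆ A, F.Finite ∧ x ∈ finCl G F) ∧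
    (∀ (A : Set X) (a b : X), a ∈ finCl G (A ∪ {b}) → a ∉ finCl G A → b ∈ finCl G (A ∪ {a})) ∧
    (∀ A : Set X, A.Finite → finCl G A = fixCl G A) := by
  -- set-based version of the transitivity hypothesis
  have htrans' : ∀ (S : Set X), S.Finite → ∀ x y : X, x ∉ fixCl G S → y ∉ fixCl G S →
      ∃ g : G, (∀ a ∈ S, g • a = a) ∧ g • x = y := by
    intro S hS x y hx hy
    have hc : (↑hS.toFinset : Set X) = S := hS.coe_toFinset
    obtain ⟨g, hg1, hg2⟩ := htrans hS.toFinset x y (by rw [hc]; exact hx) (by rw [hc]; exact hy)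
    exact ⟨g, fun a ha => hg1 a (hS.mem_toFinset.mpr ha), hg2⟩
  have hsub : ∀ A : Set X, A ⊆ finCl G A := by
    intro A a ha
    exact mem_finCl_iff.mpr ⟨{a}, Set.singleton_subset_iff.mpr ha, Set.finite_singleton a,
      subset_fixCl {a} rfl⟩
  have hmono : ∀ A B : Set X, A ⊆ B → finCl G A ⊆ finCl G B := by
    intro A B hAB x hx
    obtain ⟨F, hFA, hFfin, hxF⟩ := mem_finCl_iff.mp hx
    exact mem_finCl_iff.mpr ⟨F, hFA.trans hAB, hFfin, hxF⟩
  have hfin : ∀ A : Set X, A.Finite → finCl G A = fixCl G A := by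
    intro A hA
    apply Set.Subset.antisymm
    · intro x hx
      obtain ⟨F, hFA, _, hxF⟩ := mem_finCl_iff.mp hx
      exact fixCl_mono hFA hxF
    · intro x hx
      exact mem_finCl_iff.mpr ⟨A, le_refl A, hA, hx⟩
  have hidem : ∀ A : Set X, finCl G (finCl G A) = finCl G A := by
    intro A
    apply Set.Subset.antisymm
    · intro x hx
      obtain ⟨F, hFA, hFfin, hxF⟩ := mem_finCl_iff.mp hx
      -- for each f ∈ F choose a finite set F_f ⊆ A with f ∈ fixCl G F_f
      have hch : ∀ f : X, ∃ Ff : Set X, f ∈ F → Ff ⊆ A ∧ Ff.Finite ∧ f ∈ fixCl G Ff := by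
        intro f
        by_cases hf : f ∈ F
        · obtain ⟨Ff, h1, h2, h3⟩ := mem_finCl_iff.mp (hFA hf)
          exact ⟨Ff, fun _ => ⟨h1, h2, h3⟩⟩
        · exact ⟨∅, fun h => absurd h hf⟩
      choose Ff hFf using hch
      refine mem_finCl_iff.mpr ⟨⋃ f ∈ F, Ff f, ?_, ?_, ?_⟩
      · exact Set.iUnion₂_subset fun f hf => (hFf f hf).1
      · exact hFfin.biUnion fun f hf => (hFf f hf).2.1
      · intro g hg
        apply hxF
        intro f hf
        exact (hFf f hf).2.2 g fun a ha => hg a (Set.mem_biUnion hf ha)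
    · exact hsub _
  refine ⟨hsub, hmono, hidem, ?_, ?_, hfin⟩
  · -- finite character
    intro A x hx
    obtain ⟨F, hFA, hFfin, hxF⟩ := mem_finCl_iff.mp hx
    exact ⟨F, hFA, hFfin, mem_finCl_iff.mpr ⟨F, le_refl F, hFfin, hxF⟩⟩
  · -- exchange
    intro A a b ha hna
    obtain ⟨F0, hF0, hF0fin, haF0⟩ := mem_finCl_iff.mp ha
    set F : Set X := F0 \ {b} with hFdef
    have hFA : F ⊆ A := by
      intro z hz
      rcases hF0 hz.1 with h | h
      · exact h
      · exact absurd h hz.2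
    have hFfin : F.Finite := hF0fin.diff
    have haFb : a ∈ fixCl G (F ∪ {b}) := by
      apply fixCl_mono _ haF0
      intro z hz
      by_cases hzb : z = b
      · exact Or.inr hzb
      · exact Or.inl ⟨hz, hzb⟩
    have hnaF : a ∉ fixCl G F := fun h => hna (mem_finCl_iff.mpr ⟨F, hFA, hFfin, h⟩)
    -- suffices to show b ∈ fixCl G (F ∪ {a})
    by_contra hnb
    have hb : b ∉ fixCl G (F ∪ {a}) := by
      intro h
      exact hnb (mem_finCl_iff.mpr ⟨F ∪ {a}, Set.union_subset_union_left _ hFA,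
        hFfin.union (Set.finite_singleton a), h⟩)
    have hbF : b ∉ fixCl G F := fun h => hb (fixCl_mono Set.subset_union_left h)
    have hFafin : (F ∪ {a}).Finite := hFfin.union (Set.finite_singleton a)
    -- key claim: every G_F-translate of a lies in fixCl G (F ∪ {a})
    have key : ∀ k : G, (∀ z ∈ F, k • z = z) → k • a ∈ fixCl G (F ∪ {a}) := by
      intro k hk
      have hka : k • a ∈ fixCl G (F ∪ {k • b}) := fixCl_conj hk haFb
      by_cases hc : k • b ∈ fixCl G (F ∪ {a})
      · -- then fixCl (F ∪ {k•b}) ⊆ fixCl (F ∪ {a})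
        intro g hg
        apply hka
        intro z hz
        rcases hz with hz | hz
        · exact hg z (Or.inl hz)
        · rcases hz with rfl
          exact hc g hg
      · obtain ⟨g, hg1, hg2⟩ := htrans' (F ∪ {a}) hFafin (k • b) b hc hb
        have hgk : (g * k) • a = a := by
          apply haFb
          intro z hz
          rcases hz with hz | hz
          · rw [mul_smul, hk z hz]
            exact hg1 z (Or.inl hz)
          · rcases hz with rfl
            rw [mul_smul, hg2]
        have hga : g • a = a := hg1 a (Or.inr rfl)
        rw [mul_smul] at hgk
        have : k • a = a := by
          have := hgk.trans hga.symm
          exact smul_left_cancel g this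
        rw [this]
        exact subset_fixCl _ (Or.inr rfl)
    obtain ⟨k, hk1, hk2⟩ := htrans' F hFfin a b hnaF hbF
    exact hb (hk2 ▸ key k hk1)
end
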